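/- Let X be a random Hermitian operator on a finite-dimensional Hilbert space (taking finitely many values) and Δt > 0. Then ‖E[exp(-iXΔt)] - exp(-i E[X] Δt)‖ ≤ E[‖X‖²]Δt² , where E denotes expectation and ‖·‖ the operator norm. -/

import Mathlib

/-!
Put `R(y) = exp(c y) - 1 - c y` with `c = -iΔt`. Because the weights sum to one, the affine part
of the exponential cancels and `E[exp(c X)] - exp(c E[X]) = E[R(X)] - R(E[X])`. For a Hermitian
`Y` the continuous functional calculus reduces `‖R(Y)‖` to the scalar bound
`|e^{iθ} - 1 - iθ| ≤ θ²/2` on the (real) spectrum, so `‖R(Y)‖ ≤ Δt² ‖Y‖² / 2`. Applying this to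
each `X i` and to `E[X]`, and using `‖E[X]‖² ≤ E[‖X‖²]` (Jensen), gives the two halves of the bound.
-/

open Complex ComplexConjugate

theorem Complex.norm_exp_I_mul_ofReal_sub_one_sub_le (y : ℝ) :
    ‖exp (I * y) - 1 - I * y‖ ≤ y ^ 2 / 2 := by
  let f : ℝ → ℂ := fun s => exp (I * s) - 1 - I * s
  change ‖f y‖ ≤ y ^ 2 / 2
  have hf : ∀ s : ℝ, HasDerivAt f (I * (exp (I * s) - 1)) s := fun s =>
    ((((hasDerivAt_id (s : ℂ)).const_mul I).cexp.sub_const 1).sub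
      ((hasDerivAt_id (s : ℂ)).const_mul I)).comp_ofReal.congr_deriv (by simp only [id_eq]; ring)
  have hB : ∀ s : ℝ, HasDerivAt (fun s : ℝ => s ^ 2 / 2) s s := fun s => by
    simpa using (hasDerivAt_pow 2 s).div_const 2
  -- `‖f' s‖ = ‖e^{is} - 1‖ ≤ s` on `[0, y]`, so `f` is fenced by `s ↦ s² / 2`.
  have key : ∀ y : ℝ, 0 ≤ y → ‖f y‖ ≤ y ^ 2 / 2 := fun y hy =>
    image_norm_le_of_norm_deriv_right_le_deriv_boundary
      (fun s _ => (hf s).continuousAt.continuousWithinAt) (fun s _ => (hf s).hasDerivWithinAt)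
      (by simp [f]) hB
      (fun s hs => by
        rw [norm_mul, norm_I, one_mul]
        exact Real.norm_exp_I_mul_ofReal_sub_one_le.trans (Real.norm_of_nonneg hs.1).le)
      ⟨hy, le_rfl⟩
  rcases le_total 0 y with hy | hy
  · exact key y hy
  · have hconj : f y = conj (f (-y)) := by
      simp only [f, map_sub, map_mul, map_one, conj_I, conj_ofReal, ← exp_conj]
      push_cast
      ring_nf
    rw [hconj, RCLike.norm_conj]
    simpa using key (-y) (neg_nonneg.mpr hy)

section CStarAlgebra

variable {A : Type*} [CStarAlgebra A]

theorem cfc_cexp_const_mul (a : A) [IsStarNormal a] (c : ℂ) :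
    cfc (fun z => cexp (c * z)) a = NormedSpace.exp (c • a) := by
  rw [← CFC.complex_exp_eq_normedSpace_exp (a := c • a), ← cfc_comp_smul c Complex.exp a]
  rfl

theorem IsSelfAdjoint.norm_exp_I_mul_smul_sub_one_sub_le {a : A} (ha : IsSelfAdjoint a) (t : ℝ) :
    ‖NormedSpace.exp ((I * (t : ℂ)) • a) - 1 - (I * (t : ℂ)) • a‖ ≤ (t * ‖a‖) ^ 2 / 2 := by
  nontriviality A
  have := ha.isStarNormal
  have hcfc : cfc (fun z => cexp (I * t * z) - 1 - I * t * z) a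
      = NormedSpace.exp ((I * (t : ℂ)) • a) - 1 - (I * (t : ℂ)) • a := by
    rw [cfc_sub (fun z => cexp (I * t * z) - 1) (fun z => I * t * z) a,
      cfc_sub (fun z => cexp (I * t * z)) (fun _ => 1) a, cfc_const_one ℂ a,
      cfc_const_mul_id _ a, cfc_cexp_const_mul]
  rw [← hcfc]
  refine norm_cfc_le (by positivity) fun z hz => ?_
  obtain ⟨r, rfl⟩ : ∃ r : ℝ, (r : ℂ) = z := ⟨z.re, (ha.mem_spectrum_eq_re hz).symm⟩
  have hr : |r| ≤ ‖a‖ := by simpa using spectrum.norm_le_norm_of_mem hz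
  calc ‖cexp (I * t * r) - 1 - I * t * r‖ = ‖cexp (I * ↑(t * r)) - 1 - I * ↑(t * r)‖ := by
        push_cast; ring_nf
    _ ≤ (t * r) ^ 2 / 2 := norm_exp_I_mul_ofReal_sub_one_sub_le _
    _ ≤ (t * ‖a‖) ^ 2 / 2 := by
        gcongr ?_ / 2
        rw [sq_le_sq, abs_mul, abs_mul, abs_norm]
        gcongr

end CStarAlgebra

section Averages

variable {E ι : Type*} [SeminormedAddCommGroup E] [NormedSpace ℝ E]

theorem norm_sum_smul_le_sum_mul_norm (s : Finset ι) {p : ι → ℝ} (hp : ∀ i ∈ s, 0 ≤ p i)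
    (x : ι → E) : ‖∑ i ∈ s, p i • x i‖ ≤ ∑ i ∈ s, p i * ‖x i‖ :=
  norm_sum_le_of_le s fun i hi => (norm_smul_of_nonneg (hp i hi) (x i)).le

theorem sq_norm_sum_smul_le (s : Finset ι) {p : ι → ℝ} (hp : ∀ i ∈ s, 0 ≤ p i)
    (hp1 : ∑ i ∈ s, p i = 1) (x : ι → E) :
    ‖∑ i ∈ s, p i • x i‖ ^ 2 ≤ ∑ i ∈ s, p i * ‖x i‖ ^ 2 :=
  calc ‖∑ i ∈ s, p i • x i‖ ^ 2 ≤ (∑ i ∈ s, p i * ‖x i‖) ^ 2 := by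
        gcongr; exact norm_sum_smul_le_sum_mul_norm s hp x
    _ ≤ ∑ i ∈ s, p i * ‖x i‖ ^ 2 :=
        (convexOn_pow 2).map_sum_le hp hp1 fun i _ => norm_nonneg (x i)

end Averages

theorem norm_sum_smul_exp_sub_exp_sum_smul_le {A ι : Type*} [CStarAlgebra A] (s : Finset ι)
    {p : ι → ℝ} (hp : ∀ i ∈ s, 0 ≤ p i) (hp1 : ∑ i ∈ s, p i = 1) {x : ι → A}
    (hx : ∀ i ∈ s, IsSelfAdjoint (x i)) (t : ℝ) :
    ‖∑ i ∈ s, p i • NormedSpace.exp ((I * (t : ℂ)) • x i) -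
        NormedSpace.exp ((I * (t : ℂ)) • ∑ i ∈ s, p i • x i)‖ ≤
      (∑ i ∈ s, p i * ‖x i‖ ^ 2) * t ^ 2 := by
  set c : ℂ := I * t
  set S := ∑ i ∈ s, p i • x i
  let R : A → A := fun y => NormedSpace.exp (c • y) - 1 - c • y
  have hS : IsSelfAdjoint S :=
    isSelfAdjoint_sum s fun i hi => (IsSelfAdjoint.all (p i)).smul (hx i hi)
  have hsplit : ∑ i ∈ s, p i • NormedSpace.exp (c • x i) - NormedSpace.exp (c • S)
      = ∑ i ∈ s, p i • R (x i) - R S := by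
    simp only [R, S, smul_sub, Finset.sum_sub_distrib, ← Finset.sum_smul, hp1, one_smul,
      Finset.smul_sum, smul_comm c]
    abel
  calc _ = ‖∑ i ∈ s, p i • R (x i) - R S‖ := by rw [hsplit]
    _ ≤ ∑ i ∈ s, p i * ‖R (x i)‖ + ‖R S‖ :=
        norm_sub_le_of_le (norm_sum_smul_le_sum_mul_norm s hp _) le_rfl
    _ ≤ ∑ i ∈ s, p i * ((t * ‖x i‖) ^ 2 / 2) + (t * ‖S‖) ^ 2 / 2 := by
        gcongr with i hi
        · exact hp i hi
        · exact (hx i hi).norm_exp_I_mul_smul_sub_one_sub_le t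
        · exact hS.norm_exp_I_mul_smul_sub_one_sub_le t
    _ ≤ ∑ i ∈ s, p i * ((t * ‖x i‖) ^ 2 / 2) + t ^ 2 * (∑ i ∈ s, p i * ‖x i‖ ^ 2) / 2 := by
        rw [mul_pow]
        gcongr
        exact sq_norm_sum_smul_le s hp hp1 x
    _ = (∑ i ∈ s, p i * ‖x i‖ ^ 2) * t ^ 2 := by
        rw [Finset.sum_congr rfl fun i _ => (by ring : p i * ((t * ‖x i‖) ^ 2 / 2)
          = p i * ‖x i‖ ^ 2 * (t ^ 2 / 2)), ← Finset.sum_mul]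
        ring

theorem stmt1_general {n m : ℕ}
    (p : Fin m → ℝ) (hp : ∀ i, 0 ≤ p i) (hp1 : ∑ i, p i = 1)
    (X : Fin m → (EuclideanSpace ℂ (Fin n) →L[ℂ] EuclideanSpace ℂ (Fin n)))
    (hX : ∀ i, IsSelfAdjoint (X i)) (Δt : ℝ) :
    ‖(∑ i, p i • NormedSpace.exp ((-(Complex.I * Δt)) • X i)) -
        NormedSpace.exp ((-(Complex.I * Δt)) • ∑ i, p i • X i)‖ ≤
      (∑ i, p i * ‖X i‖ ^ 2) * Δt ^ 2 := by
  have hc : -(I * (Δt : ℂ)) = I * ((-Δt : ℝ) : ℂ) := by push_cast; ring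
  simpa only [hc, neg_sq] using norm_sum_smul_exp_sub_exp_sum_smul_le Finset.univ
    (fun i _ => hp i) hp1 (fun i _ => hX i) (-Δt)

/-- For a random Hermitian operator `X` taking finitely many values `X i` with
probabilities `p i`, and `Δt > 0`,
`‖E[exp(-i X Δt)] - exp(-i E[X] Δt)‖ ≤ E[‖X‖²] Δt²`. -/
theorem stmt1 {n m : ℕ}
    (p : Fin m → ℝ) (hp : ∀ i, 0 ≤ p i) (hp1 : ∑ i, p i = 1)
    (X : Fin m → (EuclideanSpace ℂ (Fin n) →L[ℂ] EuclideanSpace ℂ (Fin n)))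
    (hX : ∀ i, IsSelfAdjoint (X i)) (Δt : ℝ) (hΔt : 0 < Δt) :
    ‖(∑ i, p i • NormedSpace.exp ((-(Complex.I * Δt)) • X i)) -
        NormedSpace.exp ((-(Complex.I * Δt)) • ∑ i, p i • X i)‖ ≤
      (∑ i, p i * ‖X i‖ ^ 2) * Δt ^ 2 :=
  stmt1_general p hp hp1 X hX Δt
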